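/- arXiv:2604.01045 — 2 statements merged into one kernel-verified Lean document; each statement's English description precedes it below -/
import Mathlib

section
/- Let A ∈ SL(n, ℤ) with n ≥ 4, with irreducible characteristic polynomial f, and suppose det(I − Λ² A) = ±1. Then f ≠ f*, where f*(x) = (−x)ⁿ f(1/x) is the signed reciprocal polynomial. -/
/-!
If `f = f*`, the complex roots of `f` are closed under `λ ↦ λ⁻¹`, and since an irreducible
integer polynomial of degree `≥ 2` has no integer roots, some root satisfies `λ ≠ 0` and
`λ ≠ λ⁻¹`. Left eigenvectors `u, w` of `A` for `λ, λ⁻¹` are `ℤ`-linear functionals `ℤⁿ → ℂ`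
with eigenvalues `λ, λ⁻¹` under `A`, so the functional `x ∧ y ↦ u(x) w(y) - u(y) w(x)` on
`Λ²ℤⁿ` is fixed by `Λ²A`; it is nonzero because `u, w` are not proportional. But
`det(1 - Λ²A) = ±1` makes `1 - Λ²A` surjective, and a functional killed by `1 - Λ²A` is zero.
Working with `ℂ`-valued functionals on the integral exterior square avoids any base change
of `Λ²`.
-/

open ExteriorAlgebra Polynomial

/-- The endomorphism of the `k`-th exterior power of `ℤⁿ` induced by an integer matrix `A`. -/
def extPowMap (n k : ℕ) (A : Matrix (Fin n) (Fin n) ℤ) :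
    ⋀[ℤ]^k (Fin n → ℤ) →ₗ[ℤ] ⋀[ℤ]^k (Fin n → ℤ) :=
  (ExteriorAlgebra.map (Matrix.toLin' A)).toLinearMap.restrict (fun x hx => by
    have h1 : Submodule.map (ExteriorAlgebra.map (Matrix.toLin' A)).toLinearMap
        (⋀[ℤ]^k (Fin n → ℤ)) ≤ ⋀[ℤ]^k (Fin n → ℤ) := by
      rw [exteriorPower, Submodule.map_pow]
      refine pow_le_pow_left' ?_ k
      rw [ExteriorAlgebra.ι_range_map_map]
      calc Submodule.map (ι ℤ) (LinearMap.range (Matrix.toLin' A))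
          ≤ Submodule.map (ι ℤ) ⊤ := Submodule.map_mono le_top
        _ = LinearMap.range (ι ℤ (M := Fin n → ℤ)) := (LinearMap.range_eq_map _).symm
    exact h1 ⟨x, hx, rfl⟩)

open Matrix

theorem extPowMap_eq_map (n k : ℕ) (A : Matrix (Fin n) (Fin n) ℤ) :
    extPowMap n k A = exteriorPower.map k (toLin' A) := by
  ext m
  simp only [LinearMap.compAlternatingMap_apply, exteriorPower.map_apply_ιMulti,
    exteriorPower.ιMulti_apply_coe]
  exact ExteriorAlgebra.map_apply_ιMulti (toLin' A) m

section DetFunctional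

variable {R S M : Type*} [CommRing R] [CommRing S] [Algebra R S] [AddCommGroup M] [Module R M]
  {k : ℕ}

noncomputable def detFunctional (f : Fin k → M →ₗ[R] S) : ⋀[R]^k M →ₗ[R] S :=
  exteriorPower.alternatingMapLinearEquiv
    (MultilinearMap.mkPiAlgebra R (Fin k) S |>.compLinearMap f).alternatization

theorem detFunctional_ιMulti (f : Fin k → M →ₗ[R] S) (v : Fin k → M) :
    detFunctional f (exteriorPower.ιMulti R k v) = (of fun a i => f i (v a)).det := by
  simp [detFunctional, MultilinearMap.alternatization_apply, det_apply', Units.smul_def]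

theorem detFunctional_comp_map (f : Fin k → M →ₗ[R] S) (g : M →ₗ[R] M) (c : Fin k → S)
    (hf : ∀ i x, f i (g x) = c i * f i x) :
    detFunctional f ∘ₗ exteriorPower.map k g = (∏ i, c i) • detFunctional f := by
  ext v
  have hmat : (of fun a i => f i (g (v a))) = of (fun a i => f i (v a)) * diagonal c := by
    ext a i
    simp [hf, mul_comm]
  simp [detFunctional_ιMulti, hmat, det_mul, mul_comm]

end DetFunctional

theorem LinearMap.eq_zero_of_comp_eq_self_of_isUnit_det {R M N : Type*} [CommRing R]
    [AddCommGroup M] [Module R M] [Module.Free R M] [Module.Finite R M] [AddCommGroup N]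
    [Module R N] (θ : M →ₗ[R] N) (g : M →ₗ[R] M) (hθ : θ ∘ₗ g = θ)
    (hg : IsUnit (LinearMap.det (1 - g))) : θ = 0 := by
  have hsurj : Function.Surjective (1 - g : M →ₗ[R] M) :=
    (Module.End.isUnit_iff _).1 ((LinearMap.isUnit_iff_isUnit_det _).2 hg) |>.surjective
  ext x
  obtain ⟨y, rfl⟩ := hsurj x
  simp [← LinearMap.comp_apply, hθ]

theorem Matrix.exists_vecMul_eq_smul_of_isRoot_charpoly {K ι : Type*} [Field K] [Fintype ι]
    [DecidableEq ι] (M : Matrix ι ι K) {c : K} (h : M.charpoly.IsRoot c) :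
    ∃ u ≠ 0, u ᵥ* M = c • u := by
  rw [IsRoot, eval_charpoly, ← exists_vecMul_eq_zero_iff] at h
  obtain ⟨u, hu0, hu⟩ := h
  refine ⟨u, hu0, ?_⟩
  rw [vecMul_sub, sub_eq_zero, scalar_apply] at hu
  ext i
  simp [← hu, vecMul_diagonal, mul_comm]

theorem Matrix.linearCombination_mulVec {R S m n : Type*} [CommRing R] [CommRing S]
    [Algebra R S] [Fintype m] [Fintype n] (u : m → S) (A : Matrix m n R) (x : n → R) :
    Fintype.linearCombination R u (A *ᵥ x) =
      Fintype.linearCombination R (u ᵥ* A.map (algebraMap R S)) x := by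
  simp only [Fintype.linearCombination_apply, mulVec, vecMul, dotProduct, map_apply,
    Algebra.smul_def, map_sum, map_mul, Finset.sum_mul, Finset.mul_sum]
  rw [Finset.sum_comm]
  exact Finset.sum_congr rfl fun j _ => Finset.sum_congr rfl fun i _ => by ring

theorem Matrix.linearCombination_mulVec_of_vecMul_eq_smul {R S n : Type*} [CommRing R]
    [CommRing S] [Algebra R S] [Fintype n] {u : n → S} {A : Matrix n n R} {c : S}
    (hu : u ᵥ* A.map (algebraMap R S) = c • u) (x : n → R) :
    Fintype.linearCombination R u (A *ᵥ x) = c * Fintype.linearCombination R u x := by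
  rw [linearCombination_mulVec, hu, Fintype.linearCombination_apply,
    Fintype.linearCombination_apply, Finset.mul_sum]
  simp only [Pi.smul_apply, smul_eq_mul, mul_smul_comm]

theorem Matrix.exists_mul_sub_mul_ne_zero_of_vecMul_eq_smul {K ι : Type*} [Field K] [Fintype ι]
    {M : Matrix ι ι K} {u w : ι → K} {a b : K} (hu : u ᵥ* M = a • u) (hw : w ᵥ* M = b • w)
    (hu0 : u ≠ 0) (hw0 : w ≠ 0) (hab : a ≠ b) : ∃ i j, u i * w j - u j * w i ≠ 0 := by
  by_contra! h
  obtain ⟨i, hi⟩ : ∃ i, u i ≠ 0 := Function.ne_iff.1 hu0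
  have hwu : w = (w i / u i) • u := by
    ext j
    simp only [Pi.smul_apply, smul_eq_mul]
    field_simp [hi]
    linear_combination h i j
  have hwM : w ᵥ* M = a • w := by
    rw [hwu, smul_vecMul, hu, smul_comm]
  exact hab (smul_left_injective K hw0 (hwM.symm.trans hw))

theorem Polynomial.aeval_intCast_ne_zero_of_irreducible {K : Type*} [Field K] [CharZero K]
    {p : ℤ[X]} (hp : Irreducible p) (hdeg : p.natDegree ≠ 1) (a : ℤ) : aeval (a : K) p ≠ 0 := by
  intro h
  rw [← eq_intCast (algebraMap ℤ K), aeval_algebraMap_apply, algebraMap_int_eq, eq_intCast,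
    Int.cast_eq_zero] at h
  exact hdeg (natDegree_eq_of_degree_eq_some (degree_eq_one_of_irreducible_of_root hp h))

theorem Polynomial.aeval_inv_eq_zero_of_eq_neg_one_pow_mul_reverse {R K : Type*} [CommRing R]
    [Field K] [Algebra R K] {p : R[X]} {n : ℕ} (hp : p = (-1) ^ n * p.reverse) {x : K}
    (hx0 : x ≠ 0) (hx : aeval x p = 0) : aeval x⁻¹ p = 0 := by
  have : Invertible x := invertibleOfNonzero hx0
  have hrev : aeval (⅟x) p.reverse = 0 := (eval₂_reverse_eq_zero_iff _ x p).2 hx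
  rw [hp, map_mul, ← invOf_eq_inv, hrev, mul_zero]

theorem Polynomial.exists_root_ne_inv_of_eq_neg_one_pow_mul_reverse {K : Type*} [Field K]
    [IsAlgClosed K] [CharZero K] {p : ℤ[X]} (hp : Irreducible p) (hdeg : 2 ≤ p.natDegree)
    {n : ℕ} (hrec : p = (-1) ^ n * p.reverse) :
    ∃ l : K, l ≠ 0 ∧ l ≠ l⁻¹ ∧ aeval l p = 0 ∧ aeval l⁻¹ p = 0 := by
  have hno_int_root (a : ℤ) : aeval (a : K) p ≠ 0 :=
    aeval_intCast_ne_zero_of_irreducible hp (by omega) a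
  obtain ⟨l, hl⟩ := IsAlgClosed.exists_aeval_eq_zero K p
    (natDegree_pos_iff_degree_pos.1 (by omega)).ne'
  have hl0 : l ≠ 0 := by rintro rfl; exact hno_int_root 0 (by simpa using hl)
  refine ⟨l, hl0, fun h => ?_, hl, aeval_inv_eq_zero_of_eq_neg_one_pow_mul_reverse hrec hl0 hl⟩
  have hsq : l * l = 1 := by nth_rewrite 2 [h]; exact mul_inv_cancel₀ hl0
  rcases mul_self_eq_one_iff.1 hsq with rfl | rfl
  · exact hno_int_root 1 (by simpa using hl)
  · exact hno_int_root (-1) (by simpa using hl)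

theorem stmt_6_general (n : ℕ) (hn : 4 ≤ n) (A : Matrix (Fin n) (Fin n) ℤ)
    (hirr : Irreducible A.charpoly)
    (hCS2 : LinearMap.det (1 - extPowMap n 2 A) = 1 ∨
            LinearMap.det (1 - extPowMap n 2 A) = -1) :
    A.charpoly ≠ (-1 : Polynomial ℤ) ^ n * A.charpoly.reverse := by
  intro hf
  have hdeg : 2 ≤ A.charpoly.natDegree := by
    rw [charpoly_natDegree_eq_dim, Fintype.card_fin]; omega
  obtain ⟨l, hl0, hne, hl, hlinv⟩ :=
    exists_root_ne_inv_of_eq_neg_one_pow_mul_reverse (K := ℂ) hirr hdeg hf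
  have hroot (c : ℂ) (hc : aeval c A.charpoly = 0) :
      (A.map (algebraMap ℤ ℂ)).charpoly.IsRoot c := by
    rwa [charpoly_map, IsRoot, eval_map_algebraMap]
  obtain ⟨u, hu0, hu⟩ := exists_vecMul_eq_smul_of_isRoot_charpoly _ (hroot l hl)
  obtain ⟨w, hw0, hw⟩ := exists_vecMul_eq_smul_of_isRoot_charpoly _ (hroot _ hlinv)
  let θ := detFunctional ![Fintype.linearCombination ℤ u, Fintype.linearCombination ℤ w]
  have hθ : θ ∘ₗ extPowMap n 2 A = θ := by
    rw [extPowMap_eq_map, detFunctional_comp_map _ _ ![l, l⁻¹]]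
    · simp [θ, mul_inv_cancel₀ hl0]
    · intro i x
      fin_cases i
      exacts [linearCombination_mulVec_of_vecMul_eq_smul hu x,
        linearCombination_mulVec_of_vecMul_eq_smul hw x]
  have hθ0 := LinearMap.eq_zero_of_comp_eq_self_of_isUnit_det θ _ hθ (Int.isUnit_iff.2 hCS2)
  obtain ⟨i, j, hij⟩ := exists_mul_sub_mul_ne_zero_of_vecMul_eq_smul hu hw hu0 hw0 hne
  have hminor :=
    LinearMap.congr_fun hθ0 (exteriorPower.ιMulti ℤ 2 ![Pi.single i 1, Pi.single j 1])
  simp only [θ, detFunctional_ιMulti, det_fin_two, of_apply, cons_val_zero, cons_val_one,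
    cons_val_fin_one, Fintype.linearCombination_apply_single, one_smul, LinearMap.zero_apply]
    at hminor
  exact hij (by linear_combination hminor)

theorem stmt_6 (n : ℕ) (hn : 4 ≤ n) (A : Matrix (Fin n) (Fin n) ℤ) (hA : A.det = 1)
    (hirr : Irreducible A.charpoly)
    (hCS2 : LinearMap.det (1 - extPowMap n 2 A) = 1 ∨
            LinearMap.det (1 - extPowMap n 2 A) = -1) :
    A.charpoly ≠ (-1 : Polynomial ℤ) ^ n * A.charpoly.reverse :=
  stmt_6_general n hn A hirr hCS2
end

section
/- Let p be a prime, f ∈ ℤ[x] an irreducible monic polynomial of degree n with root θ, and b ∈ ℤ. Let r ∈ ℤ be the remainder of f upon division by (x − b), i.e., r = f(b). Suppose (x − b)² divides f mod p and p² does not divide f(b). Then the ℤ-module generated by {p, θ − b, θ(θ − b), …, θ^{n−2}(θ − b)} equals the ideal (p, θ − b) of ℤ[θ]. -/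
open Polynomial

theorem stmt_8 (p : ℕ) (hp : p.Prime) (n : ℕ) (f : Polynomial ℤ) (hmonic : f.Monic)
    (hdeg : f.natDegree = n) (hirr : Irreducible f) (b : ℤ)
    (hsq : (X - C (b : ZMod p)) ^ 2 ∣ f.map (Int.castRingHom (ZMod p)))
    (hp2 : ¬ ((p : ℤ) ^ 2 ∣ f.eval b)) :
    (Submodule.span ℤ
        (insert ((p : ℤ) : AdjoinRoot f)
          ((fun i => (AdjoinRoot.root f) ^ i * (AdjoinRoot.root f - (b : AdjoinRoot f))) ''
            (Set.Iio (n - 1)))) : Set (AdjoinRoot f)) =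
      (Ideal.span {((p : ℤ) : AdjoinRoot f),
        AdjoinRoot.root f - (b : AdjoinRoot f)} : Set (AdjoinRoot f)) := by
  haveI : Fact p.Prime := ⟨hp⟩
  classical
  set R := AdjoinRoot f with hR
  set θ : R := AdjoinRoot.root f with hθ
  set φ := Int.castRingHom (ZMod p) with hφ
  have hfm : (f.map φ).Monic := hmonic.map φ
  obtain ⟨hbar, hh⟩ := hsq
  have hXbm : ((X - C ((b : ℤ) : ZMod p)) ^ 2).Monic := (monic_X_sub_C _).pow 2
  have hhm : hbar.Monic := hXbm.of_mul_monic_left (hh ▸ hfm)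
  have hdeg2 : n = 2 + hbar.natDegree := by
    have h1 : (f.map φ).natDegree = n := by rw [hmonic.natDegree_map]; exact hdeg
    rw [hh, hXbm.natDegree_mul hhm, natDegree_pow, natDegree_X_sub_C] at h1
    omega
  have hn2 : 2 ≤ n := by omega
  -- lift hbar to a monic integer polynomial H of degree n-2
  obtain ⟨H, hHmap, hHdeg, hHm⟩ := Polynomial.lifts_and_degree_eq_and_monic
    ((Polynomial.mem_lifts _).2 (Polynomial.map_surjective φ ZMod.intCast_surjective hbar)) hhm
  have hHnd : H.natDegree = n - 2 := by
    rw [natDegree_eq_of_degree_eq hHdeg]; omega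
  -- w := X^(n-1) - (X - C b) * H  has natDegree < n-1
  set w : ℤ[X] := X ^ (n - 1) - (X - C b) * H with hw
  have hXbHm : ((X - C b) * H).Monic := (monic_X_sub_C b).mul hHm
  have hXbHnd : ((X - C b) * H).natDegree = n - 1 := by
    rw [(monic_X_sub_C b).natDegree_mul hHm, natDegree_X_sub_C, hHnd]; omega
  have hwdeg : w.natDegree < n - 1 := by
    have hlt : w.degree < (X ^ (n - 1) : ℤ[X]).degree := by
      apply degree_sub_lt
      · rw [degree_eq_natDegree (monic_X_pow (n-1)).ne_zero,
          degree_eq_natDegree hXbHm.ne_zero, natDegree_X_pow, hXbHnd]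
      · exact (monic_X_pow (n-1)).ne_zero
      · rw [(monic_X_pow (n-1)).leadingCoeff, hXbHm.leadingCoeff]
    by_cases hw0 : w = 0
    · rw [hw0, natDegree_zero]; omega
    · have := natDegree_lt_natDegree hw0 hlt
      rwa [natDegree_X_pow] at this
  -- g := X^(n-1)*(X - C b) - f  has natDegree ≤ n - 1
  set g : ℤ[X] := X ^ (n - 1) * (X - C b) - f with hg
  have hXXbm : (X ^ (n - 1) * (X - C b) : ℤ[X]).Monic := (monic_X_pow _).mul (monic_X_sub_C b)
  have hXXbnd : (X ^ (n - 1) * (X - C b) : ℤ[X]).natDegree = n := by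
    rw [(monic_X_pow _).natDegree_mul (monic_X_sub_C b), natDegree_X_pow, natDegree_X_sub_C]; omega
  have hgdeg : g.natDegree ≤ n - 1 := by
    have hlt : g.degree < (X ^ (n - 1) * (X - C b) : ℤ[X]).degree := by
      apply degree_sub_lt
      · rw [degree_eq_natDegree hXXbm.ne_zero, degree_eq_natDegree hmonic.ne_zero, hXXbnd, hdeg]
      · exact hXXbm.ne_zero
      · rw [hXXbm.leadingCoeff, hmonic.leadingCoeff]
    by_cases hg0 : g = 0
    · rw [hg0, natDegree_zero]; omega
    · have := natDegree_lt_natDegree hg0 hlt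
      rw [hXXbnd] at this; omega
  -- d := g - (X - C b) * w  is divisible by C p
  set d : ℤ[X] := g - (X - C b) * w with hd
  have hmapd : d.map φ = 0 := by
    have hCb : (C b : ℤ[X]).map φ = C ((b : ℤ) : ZMod p) := by
      rw [map_C]; norm_num [hφ]
    rw [hd, hg, hw]
    simp only [Polynomial.map_sub, Polynomial.map_mul, Polynomial.map_pow, map_X, hCb, hh, hHmap]
    ring
  have hdvd : C (p : ℤ) ∣ d := by
    rw [C_dvd_iff_dvd_coeff]
    intro i
    have h0 : ((d.coeff i : ℤ) : ZMod p) = 0 := by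
      have := congrArg (fun q => q.coeff i) hmapd
      simpa [coeff_map] using this
    exact_mod_cast (ZMod.intCast_zmod_eq_zero_iff_dvd _ _).1 h0
  obtain ⟨u, hu⟩ := hdvd
  have hpne : (p : ℤ) ≠ 0 := by exact_mod_cast hp.ne_zero
  have hudeg : u.natDegree < n := by
    have hdnd : d.natDegree ≤ n - 1 := by
      refine le_trans (natDegree_sub_le _ _) (max_le hgdeg ?_)
      refine le_trans (natDegree_mul_le) ?_
      rw [natDegree_X_sub_C]; omega
    have : u.natDegree = d.natDegree := by rw [hu, natDegree_C_mul hpne]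
    omega
  -- the key identity: θ^(n-1)*(θ-b) = (θ-b)*w(θ) + p*u(θ)
  have hf0 : aeval θ f = 0 := by rw [hθ, AdjoinRoot.aeval_eq, AdjoinRoot.mk_self]
  have hkey : θ ^ (n - 1) * (θ - (b : R)) = (θ - (b : R)) * aeval θ w + ((p : ℤ) : R) * aeval θ u := by
    have h1 : (X ^ (n - 1) * (X - C b) : ℤ[X]) = f + ((X - C b) * w + C (p : ℤ) * u) := by
      have h2 : g - (X - C b) * w = C (p : ℤ) * u := hu ▸ rfl
      rw [hg] at h2; linear_combination h2
    have h3 := congrArg (aeval θ) h1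
    simp only [map_add, map_mul, map_sub, map_pow, aeval_X, aeval_C, hf0,
      algebraMap_int_eq, eq_intCast, map_intCast, zero_add] at h3
    exact h3
  -- the module M
  set S : Set R := insert ((p : ℤ) : R)
      ((fun i => θ ^ i * (θ - (b : R))) '' (Set.Iio (n - 1))) with hS
  set M := Submodule.span ℤ S with hM
  have hpM : ((p : ℤ) : R) ∈ M := Submodule.subset_span (Set.mem_insert _ _)
  have hgen : ∀ i, i < n - 1 → θ ^ i * (θ - (b : R)) ∈ M := fun i hi =>
    Submodule.subset_span (Set.mem_insert_of_mem _ ⟨i, hi, rfl⟩)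
  -- main induction
  have main : ∀ k, ((p : ℤ) : R) * θ ^ k ∈ M ∧ θ ^ k * (θ - (b : R)) ∈ M := by
    intro k
    induction k using Nat.strong_induction_on with
    | _ k IH =>
      have hA : ((p : ℤ) : R) * θ ^ k ∈ M := by
        cases k with
        | zero => simpa using hpM
        | succ j =>
          have h1 : ((p : ℤ) : R) * θ ^ (j + 1)
              = b • (((p : ℤ) : R) * θ ^ j) + (p : ℤ) • (θ ^ j * (θ - (b : R))) := by
            simp only [zsmul_eq_mul]
            ring
          rw [h1]
          exact M.add_mem (M.smul_mem _ (IH j (Nat.lt_succ_self j)).1)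
            (M.smul_mem _ (IH j (Nat.lt_succ_self j)).2)
      refine ⟨hA, ?_⟩
      by_cases hk : k < n - 1
      · exact hgen k hk
      · push_neg at hk
        set m := k - (n - 1) with hm
        have hkm : k = (n - 1) + m := by omega
        have h2 : θ ^ k * (θ - (b : R)) = θ ^ m * (θ ^ (n - 1) * (θ - (b : R))) := by
          rw [hkm, pow_add]; ring
        rw [h2, hkey, mul_add]
        refine M.add_mem ?_ ?_
        · have h3 : θ ^ m * ((θ - (b : R)) * aeval θ w)
              = ∑ i ∈ Finset.range (n - 1), w.coeff i • (θ ^ (m + i) * (θ - (b : R))) := by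
            rw [aeval_eq_sum_range' hwdeg θ, Finset.mul_sum, Finset.mul_sum]
            refine Finset.sum_congr rfl fun i _ => ?_
            simp only [zsmul_eq_mul, pow_add]
            ring
          rw [h3]
          refine Submodule.sum_mem _ fun i hi => M.smul_mem _ ?_
          have hilt : m + i < k := by
            simp only [Finset.mem_range] at hi; omega
          exact (IH _ hilt).2
        · have h4 : θ ^ m * (((p : ℤ) : R) * aeval θ u)
              = ∑ i ∈ Finset.range n, u.coeff i • (((p : ℤ) : R) * θ ^ (m + i)) := by
            rw [aeval_eq_sum_range' hudeg θ, Finset.mul_sum, Finset.mul_sum]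
            refine Finset.sum_congr rfl fun i _ => ?_
            simp only [zsmul_eq_mul, pow_add]
            ring
          rw [h4]
          refine Submodule.sum_mem _ fun i hi => M.smul_mem _ ?_
          have hle : m + i ≤ k := by
            simp only [Finset.mem_range] at hi; omega
          rcases lt_or_eq_of_le hle with h | h
          · exact (IH _ h).1
          · rw [h]; exact hA
  -- closure of M under multiplication by θ
  have hθmul : ∀ z ∈ M, θ * z ∈ M := by
    intro z hz
    refine Submodule.span_induction ?_ ?_ ?_ ?_ hz
    · intro x hx
      rcases hx with rfl | ⟨i, _, rfl⟩
      · have := (main 1).1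
        simpa [mul_comm] using this
      · have := (main (i + 1)).2
        have heq : θ * (θ ^ i * (θ - (b : R))) = θ ^ (i + 1) * (θ - (b : R)) := by
          rw [pow_succ]; ring
        rw [heq]; exact this
    · simp
    · intro x y _ _ hx hy
      rw [mul_add]; exact M.add_mem hx hy
    · intro a x _ hx
      rw [mul_smul_comm]; exact M.smul_mem a hx
  -- closure under multiplication by arbitrary ring elements
  have hmul : ∀ (r : R) (z : R), z ∈ M → r * z ∈ M := by
    intro r z hz
    obtain ⟨q, rfl⟩ := AdjoinRoot.mk_surjective r
    rw [← AdjoinRoot.aeval_eq, ← hθ]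
    have hpow : ∀ i, θ ^ i * z ∈ M := by
      intro i
      induction i with
      | zero => simpa using hz
      | succ j ih =>
        have heq : θ ^ (j + 1) * z = θ * (θ ^ j * z) := by rw [pow_succ]; ring
        rw [heq]; exact hθmul _ ih
    have heq2 : aeval θ q * z
        = ∑ i ∈ Finset.range (q.natDegree + 1), q.coeff i • (θ ^ i * z) := by
      rw [aeval_eq_sum_range θ, Finset.sum_mul]
      exact Finset.sum_congr rfl fun i _ => smul_mul_assoc _ _ _
    rw [heq2]
    exact Submodule.sum_mem _ fun i _ => M.smul_mem _ (hpow i)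
  -- now the two inclusions
  apply Set.Subset.antisymm
  · intro x hx
    simp only [SetLike.mem_coe] at hx ⊢
    refine Submodule.span_induction ?_ (Ideal.zero_mem _) (fun a c _ _ ha hc => Ideal.add_mem _ ha hc)
      ?_ hx
    · intro y hy
      rcases hy with rfl | ⟨i, _, rfl⟩
      · exact Ideal.subset_span (Set.mem_insert _ _)
      · exact Ideal.mul_mem_left _ _ (Ideal.subset_span (Set.mem_insert_of_mem _ rfl))
    · intro a c _ hc
      rw [zsmul_eq_mul]
      exact Ideal.mul_mem_left _ _ hc
  · intro x hx
    simp only [SetLike.mem_coe] at hx ⊢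
    refine Submodule.span_induction ?_ (M.zero_mem) (fun a c _ _ ha hc => M.add_mem ha hc)
      (fun a c _ hc => ?_) hx
    · intro y hy
      rcases hy with rfl | rfl
      · exact hpM
      · have := hgen 0 (by omega)
        simpa using this
    · rw [smul_eq_mul]; exact hmul a c hc
end
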